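/- Closure under Head Expansion: in the strict λ-calculus, if Ψ ⊢ M' ∈ ⟦A⟧ and M ⟶whr M', then Ψ ⊢ M ∈ ⟦A⟧. -/

import Mathlib

/- A strict λ-calculus with strict (1), irrelevant (0) and unrestricted (u)
   function spaces, in locally nameless representation.  Contexts are finite
   sets of (variable name, type) declarations, split into three zones
   Γ (unrestricted); Ω (irrelevant); Δ (strict). -/

/-- Labels `k ::= 1 | 0 | u`. -/
inductive Lab : Type
  | one
  | zero
  | un
deriving DecidableEq

/-- Types `A ::= a | A₁ →ᵏ A₂` over atomic types `a` (names in ℕ). -/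
inductive Ty : Type
  | atom : ℕ → Ty
  | arr : Ty → Lab → Ty → Ty
deriving DecidableEq

/-- Terms `M ::= c | x | λxᵏ:A.M | M Nᵏ` (locally nameless: bound variables
    are de Bruijn indices, free variables/parameters are names). -/
inductive Tm : Type
  | const : ℕ → Tm
  | bvar : ℕ → Tm
  | fvar : ℕ → Tm
  | lam : Lab → Ty → Tm → Tm
  | app : Tm → Lab → Tm → Tm
deriving DecidableEq

/-- Opening: replace the bound variable `k` by the term `u`. -/
def Tm.openRec (k : ℕ) (u : Tm) : Tm → Tm
  | .const c => .const c
  | .bvar i => if i = k then u else .bvar i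
  | .fvar x => .fvar x
  | .lam l A M => .lam l A (Tm.openRec (k+1) u M)
  | .app M l N => .app (Tm.openRec k u M) l (Tm.openRec k u N)

/-- `M.open0 N` is the body `M` of an abstraction with its bound variable
    replaced by `N`; since free variables are named, this is
    capture-avoiding substitution of the bound variable by construction. -/
def Tm.open0 (M u : Tm) : Tm := Tm.openRec 0 u M

/-- A context zone: a finite set of declarations `x : A`. -/
abbrev Ctx : Type := Finset (ℕ × Ty)

/-- The variables declared in a context. -/
def Ctx.names (Γ : Ctx) : Finset ℕ := Γ.image Prod.fst

/-- The typing judgment `Γ; Ω; Δ ⊢ M : A` of the strict λ-calculus,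
    over a fixed signature `Sg` assigning types to constants
    (a function, so each constant is declared at most once). -/
inductive Typ (Sg : ℕ → Option Ty) : Ctx → Ctx → Ctx → Tm → Ty → Prop
  | con {Γ Ω : Ctx} {c : ℕ} {A : Ty} :
      Sg c = some A → Typ Sg Γ Ω ∅ (.const c) A
  | idu {Γ Ω : Ctx} {x : ℕ} {A : Ty} :
      (x, A) ∈ Γ → Typ Sg Γ Ω ∅ (.fvar x) A
  | id1 {Γ Ω : Ctx} {x : ℕ} {A : Ty} :
      Typ Sg Γ Ω {(x, A)} (.fvar x) A
  | lamu {Γ Ω Δ : Ctx} {x : ℕ} {A B : Ty} {M : Tm} :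
      x ∉ Ctx.names (Γ ∪ Ω ∪ Δ) →
      Typ Sg (insert (x, A) Γ) Ω Δ (Tm.open0 M (.fvar x)) B →
      Typ Sg Γ Ω Δ (.lam .un A M) (.arr A .un B)
  | lam0 {Γ Ω Δ : Ctx} {x : ℕ} {A B : Ty} {M : Tm} :
      x ∉ Ctx.names (Γ ∪ Ω ∪ Δ) →
      Typ Sg Γ (insert (x, A) Ω) Δ (Tm.open0 M (.fvar x)) B →
      Typ Sg Γ Ω Δ (.lam .zero A M) (.arr A .zero B)
  | lam1 {Γ Ω Δ : Ctx} {x : ℕ} {A B : Ty} {M : Tm} :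
      x ∉ Ctx.names (Γ ∪ Ω ∪ Δ) →
      Typ Sg Γ Ω (insert (x, A) Δ) (Tm.open0 M (.fvar x)) B →
      Typ Sg Γ Ω Δ (.lam .one A M) (.arr A .one B)
  | appu {Γ Ω Δ : Ctx} {M N : Tm} {A B : Ty} :
      Typ Sg Γ Ω Δ M (.arr A .un B) →
      Typ Sg (Γ ∪ Δ) Ω ∅ N A →
      Typ Sg Γ Ω Δ (.app M .un N) B
  | app0 {Γ Ω Δ : Ctx} {M N : Tm} {A B : Ty} :
      Typ Sg Γ Ω Δ M (.arr A .zero B) →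
      Typ Sg (Γ ∪ Ω ∪ Δ) ∅ ∅ N A →
      Typ Sg Γ Ω Δ (.app M .zero N) B
  | app1 {Γ Ω ΔM ΔN : Ctx} {M N : Tm} {A B : Ty} :
      Disjoint ΔM ΔN →
      Typ Sg (Γ ∪ ΔN) Ω ΔM M (.arr A .one B) →
      Typ Sg (Γ ∪ ΔM) Ω ΔN N A →
      Typ Sg Γ Ω (ΔM ∪ ΔN) (.app M .one N) B

/-- Closing: replace the free variable `x` by the bound variable `k`
    (used to form the λ-abstraction output by conversion to canonical form). -/
def Tm.closeRec (k x : ℕ) : Tm → Tm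
  | .const c => .const c
  | .bvar i => .bvar i
  | .fvar y => if y = x then .bvar k else .fvar y
  | .lam l A M => .lam l A (Tm.closeRec (k+1) x M)
  | .app M l N => .app (Tm.closeRec k x M) l (Tm.closeRec k x N)

/-- Weak head reduction `M ⟶whr M'`, generated by
    (βᵏ) `(λxᵏ:A.M) Nᵏ ⟶whr [N/x]M` and
    (νᵏ) `M Nᵏ ⟶whr Q Nᵏ` when `M ⟶whr Q`. -/
inductive Whr : Tm → Tm → Prop
  | beta (k : Lab) (A : Ty) (M N : Tm) :
      Whr (.app (.lam k A M) k N) (Tm.open0 M N)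
  | nu {M Q : Tm} (k : Lab) (N : Tm) :
      Whr M Q → Whr (.app M k N) (.app Q k N)

mutual
  /-- `Ψ ⊢ M ↓ N : A` : `M` has atomic form `N` of type `A`
      (over a single context `Ψ` of variable declarations). -/
  inductive ConvA (Sg : ℕ → Option Ty) : Ctx → Tm → Tm → Ty → Prop
    | con {Ψ : Ctx} {c : ℕ} {A : Ty} :
        Sg c = some A → ConvA Sg Ψ (.const c) (.const c) A
    | idv {Ψ : Ctx} {x : ℕ} {A : Ty} :
        (x, A) ∈ Ψ → ConvA Sg Ψ (.fvar x) (.fvar x) A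
    | app {Ψ : Ctx} {M P N Q : Tm} {A : Ty} {k : Lab} {B : Ty} :
        ConvA Sg Ψ M P (.arr A k B) →
        ConvC Sg Ψ N Q A →
        ConvA Sg Ψ (.app M k N) (.app P k Q) B

  /-- `Ψ ⊢ M ⇑ N : A` : `M` has canonical form `N` at type `A`. -/
  inductive ConvC (Sg : ℕ → Option Ty) : Ctx → Tm → Tm → Ty → Prop
    | whr {Ψ : Ctx} {M M' N : Tm} {a : ℕ} :
        Whr M M' → ConvC Sg Ψ M' N (.atom a) → ConvC Sg Ψ M N (.atom a)
    | atm {Ψ : Ctx} {M N : Tm} {a : ℕ} :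
        ConvA Sg Ψ M N (.atom a) → ConvC Sg Ψ M N (.atom a)
    | lam {Ψ : Ctx} {M N : Tm} {x : ℕ} {A : Ty} {k : Lab} {B : Ty} :
        x ∉ Ctx.names Ψ →
        ConvC Sg (insert (x, A) Ψ) (.app M k (.fvar x)) N B →
        ConvC Sg Ψ M (.lam k A (Tm.closeRec 0 x N)) (.arr A k B)
end

/-- The Kripke-logical relation `Ψ ⊢ M ∈ ⟦A⟧`, by induction on the type `A`:
    at atomic type, `M` has a canonical form; at `A →ᵏ B`, applying `M` to any
    valid argument in any extended context yields a valid term. -/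
def Valid (Sg : ℕ → Option Ty) : Ty → Ctx → Tm → Prop
  | .atom a => fun Ψ M => ∃ N, ConvC Sg Ψ M N (.atom a)
  | .arr A k B => fun Ψ M =>
      ∀ Ψ' : Ctx, Ψ ⊆ Ψ' → ∀ N : Tm, Valid Sg A Ψ' N → Valid Sg B Ψ' (.app M k N)

/-- **Closure under Head Expansion.**  If `Ψ ⊢ M' ∈ ⟦A⟧` and `M ⟶whr M'`,
    then `Ψ ⊢ M ∈ ⟦A⟧`. -/
theorem closure_under_head_expansion (Sg : ℕ → Option Ty)
    (A : Ty) (Ψ : Ctx) (M M' : Tm)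
    (h : Valid Sg A Ψ M') (hw : Whr M M') :
    Valid Sg A Ψ M := by
  induction A generalizing Ψ M M' with
  | atom a =>
    obtain ⟨N, hN⟩ := h
    exact ⟨N, .whr hw hN⟩
  | arr A k B _ ihB =>
    intro Ψ' hΨ N hN
    exact ihB Ψ' _ _ (h Ψ' hΨ N hN) (.nu k N hw)
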